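/- Let (β_k)_{k≥1} be real numbers and (a^{(m)})_{m≥0} a compatible family of 1-forms on the diamond hierarchical graphs, with Dirichlet magnetic operators D_m. Let m ≥ 2 and suppose cos 2β_m ≠ 0. If z ∈ ℂ with z ≠ 1 is an eigenvalue of D_m, then R_m(z) is an eigenvalue of D_{m−1} and the multiplicities agree: dim ker(D_m − z·I) = dim ker(D_{m−1} − R_m(z)·I). -/

import Mathlib

open Complex

abbrev DEdge (m : ℕ) : Type := Fin m → Fin 4

def DVtx : ℕ → Type
  | 0 => Bool
  | m + 1 => DVtx m ⊕ (DEdge m × Bool)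

instance DVtx.instFintype : (m : ℕ) → Fintype (DVtx m)
  | 0 => inferInstanceAs (Fintype Bool)
  | m + 1 =>
      letI := DVtx.instFintype m
      inferInstanceAs (Fintype (DVtx m ⊕ (DEdge m × Bool)))

instance DVtx.instDecidableEq : (m : ℕ) → DecidableEq (DVtx m)
  | 0 => inferInstanceAs (DecidableEq Bool)
  | m + 1 =>
      letI := DVtx.instDecidableEq m
      inferInstanceAs (DecidableEq (DVtx m ⊕ (DEdge m × Bool)))

/-- The inclusion of scale-`m` vertices into scale-`m+1` vertices. -/
def oldV {m : ℕ} (x : DVtx m) : DVtx (m + 1) := Sum.inl x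

/-- The new vertices at scale `m+1`: each scale-`m` edge gives two new vertices. -/
def newV {m : ℕ} (p : DEdge m × Bool) : DVtx (m + 1) := Sum.inr p

/-- Endpoints (source, target) of each canonically directed edge. Each edge `w` of `G_m`
with endpoints `x = src w`, `y = tgt w` is replaced in `G_{m+1}` by the 4-cycle
`x–u–y–v–x` with `u = (w,false)`, `v = (w,true)`, its four edges directed
`x→u`, `u→y`, `y→v`, `v→x`. -/
def dEnds : (m : ℕ) → DEdge m → DVtx m × DVtx m
  | 0, _ => (false, true)
  | m + 1, w =>
      let p : DEdge m := fun i => w i.castSucc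
      let x := (dEnds m p).1
      let y := (dEnds m p).2
      if w (Fin.last m) = 0 then (oldV x, newV (p, false))
      else if w (Fin.last m) = 1 then (newV (p, false), oldV y)
      else if w (Fin.last m) = 2 then (oldV y, newV (p, true))
      else (newV (p, true), oldV x)

def dsrc (m : ℕ) (e : DEdge m) : DVtx m := (dEnds m e).1
def dtgt (m : ℕ) (e : DEdge m) : DVtx m := (dEnds m e).2

/-- Degree of a vertex in `G_m`. -/
def ddeg (m : ℕ) (x : DVtx m) : ℕ :=
  (Finset.univ.filter fun e : DEdge m => dsrc m e = x).card +
  (Finset.univ.filter fun e : DEdge m => dtgt m e = x).card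

/-- The magnetic operator `M^a_m` associated to a 1-form `a` (recorded on the canonical
orientations of the edges; the reversed edge carries `-a e`). -/
noncomputable def magOp (m : ℕ) (a : DEdge m → ℝ) (f : DVtx m → ℂ) (x : DVtx m) : ℂ :=
  (ddeg m x : ℂ)⁻¹ *
    ((∑ e : DEdge m, if dsrc m e = x then f x - Complex.exp (Complex.I * a e) * f (dtgt m e) else 0) +
     (∑ e : DEdge m, if dtgt m e = x then f x - Complex.exp (-(Complex.I * a e)) * f (dsrc m e) else 0))

/-- The two original vertices `V_0` viewed inside `V_m`. -/
def base : (m : ℕ) → Bool → DVtx m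
  | 0, b => b
  | m + 1, b => oldV (base m b)

/-- Matrix of the magnetic operator `M^a_m`. -/
noncomputable def magMat (m : ℕ) (a : DEdge m → ℝ) : Matrix (DVtx m) (DVtx m) ℂ :=
  Matrix.of fun x y => magOp m a (fun v => if v = y then 1 else 0) x

/-- The Dirichlet magnetic operator: submatrix indexed by `V_m \ V_0`. -/
noncomputable def dirMat (m : ℕ) (a : DEdge m → ℝ) :
    Matrix {x : DVtx m // ∀ b, x ≠ base m b} {x : DVtx m // ∀ b, x ≠ base m b} ℂ :=
  (magMat m a).submatrix Subtype.val Subtype.val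

/-- Flux of a 1-form around the scale-`(m+1)` cell replacing edge `w` of `G_m`. -/
noncomputable def cellFlux {m : ℕ} (a : DEdge (m + 1) → ℝ) (w : DEdge m) : ℝ :=
  a (Fin.snoc w 0) + a (Fin.snoc w 1) + a (Fin.snoc w 2) + a (Fin.snoc w 3)

/-- The trace of a 1-form on `G_{m+1}` to `G_m`:
`a'(e_{xy}) = (1/2)(a(e_{xu}) + a(e_{uy}) + a(e_{xv}) + a(e_{vy}))`. -/
noncomputable def traceForm {m : ℕ} (a : DEdge (m + 1) → ℝ) : DEdge m → ℝ :=
  fun w => (1 / 2) * (a (Fin.snoc w 0) + a (Fin.snoc w 1) - a (Fin.snoc w 2) - a (Fin.snoc w 3))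

/-- A compatible family of 1-forms: flux `±4β_m` through every scale-`m` cell, and each
form traces to the previous one. -/
def Compatible (βs : ℕ → ℝ) (a : (m : ℕ) → DEdge m → ℝ) : Prop :=
  ∀ (k : ℕ) (w : DEdge k),
    (cellFlux (a (k + 1)) w = 4 * βs (k + 1) ∨ cellFlux (a (k + 1)) w = -(4 * βs (k + 1))) ∧
    traceForm (a (k + 1)) w = a k w

/-!
Spectral decimation. In a scale-`(m+1)` cell `x–u–y–v–x` the new vertices `u`, `v` have degree 2,
so for `z ≠ 1` the eigenvalue equation at `u` and `v` determines `f u`, `f v` as explicit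
combinations of `f x`, `f y`. Substituting them into the equation at an old vertex, the four
phases around each cell combine, thanks to the flux `±4β` and the trace condition, into
`2 cos(2β) e^{i a'(xy)}`, and the equation becomes the scale-`m` equation for the restriction to
old vertices, with eigenvalue `R(z)`. Restriction and decimated extension are then mutually
inverse linear maps between the two Dirichlet eigenspaces.
-/

open Matrix

theorem submatrix_val_mulVec {ι R : Type*} [Fintype ι] [NonUnitalNonAssocSemiring R]
    {p : ι → Prop} [DecidablePred p] (M : Matrix ι ι R) (f : {i // p i} → R) (x : {i // p i}) :
    (M.submatrix Subtype.val Subtype.val *ᵥ f) x = (M *ᵥ Function.extend Subtype.val f 0) x := by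
  simp only [mulVec, dotProduct, submatrix_apply]
  have h0 : ∑ y : {i // ¬ p i}, M x y * Function.extend Subtype.val f 0 y = 0 :=
    Finset.sum_eq_zero fun y _ => by
      rw [Function.extend_apply' _ _ _ fun ⟨z, hz⟩ => y.2 (hz ▸ z.2), Pi.zero_apply, mul_zero]
  rw [← Fintype.sum_subtype_add_sum_subtype p (fun y => M x y * Function.extend Subtype.val f 0 y),
    h0, add_zero]
  simp only [Subtype.val_injective.extend_apply]

theorem extend_subtype_val_eq {ι R : Type*} [Zero R] {p : ι → Prop} {F : ι → R}
    (hF : ∀ i, ¬ p i → F i = 0) :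
    Function.extend Subtype.val (fun i : {i // p i} => F i) 0 = F := by
  funext i
  by_cases h : p i
  · exact Subtype.val_injective.extend_apply _ _ ⟨i, h⟩
  · rw [Function.extend_apply' _ _ _ fun ⟨j, hj⟩ => h (hj ▸ j.2), hF i h, Pi.zero_apply]

theorem hasEigenvalue_toLin'_iff {ι R : Type*} [Fintype ι] [DecidableEq ι] [CommRing R]
    (A : Matrix ι ι R) (μ : R) :
    Module.End.HasEigenvalue (toLin' A) μ ↔ Nontrivial (LinearMap.ker (toLin' (A - μ • 1))) := by
  rw [Module.End.hasEigenvalue_iff, Module.End.eigenspace_def, Submodule.nontrivial_iff_ne_bot,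
    map_sub, map_smul, toLin'_one, Module.End.one_eq_id]

theorem cexp_add_cexp_neg (p q : ℝ) :
    cexp (I * (p + q : ℝ)) + cexp (-(I * (q - p : ℝ))) = 2 * Real.cos q * cexp (I * p) := by
  rw [Complex.ofReal_cos, Complex.two_cos, add_mul, ← Complex.exp_add, ← Complex.exp_add]
  congr 2 <;> push_cast <;> ring

section Graph

variable {m : ℕ}

theorem sum_dedge_succ {M : Type*} [AddCommMonoid M] (G : DEdge (m + 1) → M) :
    ∑ e, G e = ∑ w : DEdge m,
      (G (Fin.snoc w 0) + G (Fin.snoc w 1) + G (Fin.snoc w 2) + G (Fin.snoc w 3)) := by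
  rw [← (Fin.snocEquiv fun _ => Fin 4).sum_comp, Fintype.sum_prod_type, Fin.sum_univ_four]
  simp only [Finset.sum_add_distrib]
  rfl

theorem dEnds_snoc (w : DEdge m) (j : Fin 4) :
    dEnds (m + 1) (Fin.snoc w j) =
      if j = 0 then (oldV (dsrc m w), newV (w, false))
      else if j = 1 then (newV (w, false), oldV (dtgt m w))
      else if j = 2 then (oldV (dtgt m w), newV (w, true))
      else (newV (w, true), oldV (dsrc m w)) := by
  simp only [dEnds, Fin.snoc_castSucc, Fin.snoc_last]
  rfl

@[simp] theorem dsrc_snoc_zero (w : DEdge m) : dsrc (m + 1) (Fin.snoc w 0) = oldV (dsrc m w) := by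
  simp [dsrc, dEnds_snoc]

@[simp] theorem dtgt_snoc_zero (w : DEdge m) : dtgt (m + 1) (Fin.snoc w 0) = newV (w, false) := by
  simp [dtgt, dEnds_snoc]

@[simp] theorem dsrc_snoc_one (w : DEdge m) : dsrc (m + 1) (Fin.snoc w 1) = newV (w, false) := by
  simp [dsrc, dEnds_snoc]

@[simp] theorem dtgt_snoc_one (w : DEdge m) : dtgt (m + 1) (Fin.snoc w 1) = oldV (dtgt m w) := by
  simp [dtgt, dEnds_snoc]

@[simp] theorem dsrc_snoc_two (w : DEdge m) : dsrc (m + 1) (Fin.snoc w 2) = oldV (dtgt m w) := by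
  simp [dsrc, dEnds_snoc]

@[simp] theorem dtgt_snoc_two (w : DEdge m) : dtgt (m + 1) (Fin.snoc w 2) = newV (w, true) := by
  simp [dtgt, dEnds_snoc]

@[simp] theorem dsrc_snoc_three (w : DEdge m) : dsrc (m + 1) (Fin.snoc w 3) = newV (w, true) := by
  simp [dsrc, dEnds_snoc]

@[simp] theorem dtgt_snoc_three (w : DEdge m) : dtgt (m + 1) (Fin.snoc w 3) = oldV (dsrc m w) := by
  simp [dtgt, dEnds_snoc]

@[simp] theorem oldV_inj {x y : DVtx m} : oldV x = oldV y ↔ x = y := Sum.inl_injective.eq_iff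
@[simp] theorem newV_inj {p q : DEdge m × Bool} : newV p = newV q ↔ p = q :=
  Sum.inr_injective.eq_iff
@[simp] theorem oldV_ne_newV (x : DVtx m) (p : DEdge m × Bool) : oldV x ≠ newV p :=
  Sum.inl_ne_inr
@[simp] theorem newV_ne_oldV (x : DVtx m) (p : DEdge m × Bool) : newV p ≠ oldV x :=
  Sum.inr_ne_inl

theorem ddeg_newV (w : DEdge m) (b : Bool) : ddeg (m + 1) (newV (w, b)) = 2 := by
  rw [ddeg, Finset.card_filter, Finset.card_filter, sum_dedge_succ, sum_dedge_succ]
  cases b <;> simp [Finset.sum_ite_eq']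

theorem ddeg_oldV (x : DVtx m) : ddeg (m + 1) (oldV x) = 2 * ddeg m x := by
  simp only [ddeg, Finset.card_filter, sum_dedge_succ, dsrc_snoc_zero, dsrc_snoc_one,
    dsrc_snoc_two, dsrc_snoc_three, dtgt_snoc_zero, dtgt_snoc_one, dtgt_snoc_two,
    dtgt_snoc_three, oldV_inj, newV_ne_oldV, if_false, add_zero, zero_add,
    Finset.sum_add_distrib]
  ring

theorem ddeg_pos : ∀ (m : ℕ) (x : DVtx m), 0 < ddeg m x
  | 0, x => by revert x; decide
  | m + 1, Sum.inl x => by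
      rw [show (Sum.inl x : DVtx (m + 1)) = oldV x from rfl, ddeg_oldV]
      exact Nat.mul_pos two_pos (ddeg_pos m x)
  | m + 1, Sum.inr (w, b) => by
      rw [show (Sum.inr (w, b) : DVtx (m + 1)) = newV (w, b) from rfl, ddeg_newV]
      exact two_pos

theorem ddeg_cast_eq_sum (x : DVtx m) :
    (ddeg m x : ℂ) =
      ∑ w : DEdge m, ((if dsrc m w = x then 1 else 0) + if dtgt m w = x then 1 else 0) := by
  simp only [ddeg, Nat.cast_add, Finset.natCast_card_filter, Finset.sum_add_distrib]

end Graph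

section MagneticOperator

variable {m : ℕ}

noncomputable def magOpLinearMap (m : ℕ) (a : DEdge m → ℝ) : Module.End ℂ (DVtx m → ℂ) where
  toFun := magOp m a
  map_add' f g := by
    funext x
    simp only [magOp, Pi.add_apply, ← mul_add]
    congr 1
    rw [add_add_add_comm]
    congr 1 <;> rw [← Finset.sum_add_distrib] <;>
      exact Finset.sum_congr rfl fun e _ => by split_ifs <;> ring
  map_smul' c f := by
    funext x
    simp only [magOp, Pi.smul_apply, smul_eq_mul, RingHom.id_apply]
    rw [mul_left_comm]
    congr 1
    rw [mul_add, Finset.mul_sum, Finset.mul_sum]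
    congr 1 <;> exact Finset.sum_congr rfl fun e _ => by split_ifs <;> ring

theorem magMat_eq_toMatrix' (a : DEdge m → ℝ) :
    magMat m a = LinearMap.toMatrix' (magOpLinearMap m a) := by
  ext x y
  simp only [magMat, of_apply, LinearMap.toMatrix'_apply]
  congr 1
  ext v
  simp [Pi.single_apply]

abbrev Interior (m : ℕ) : Type := {x : DVtx m // ∀ b, x ≠ base m b}

theorem mem_ker_dirMat_sub_iff (a : DEdge m → ℝ) (μ : ℂ) (f : Interior m → ℂ) :
    f ∈ LinearMap.ker (toLin' (dirMat m a - μ • 1)) ↔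
      ∀ x : Interior m, magOp m a (Function.extend Subtype.val f 0) x =
        μ * Function.extend Subtype.val f 0 x := by
  simp only [LinearMap.mem_ker, toLin'_apply, funext_iff, sub_mulVec, smul_mulVec, one_mulVec,
    Pi.smul_apply, smul_eq_mul, sub_eq_zero, dirMat,
    submatrix_val_mulVec, magMat_eq_toMatrix', LinearMap.toMatrix'_mulVec,
    Subtype.val_injective.extend_apply]
  rfl

theorem magOp_newV_false (a : DEdge (m + 1) → ℝ) (G : DVtx (m + 1) → ℂ) (w : DEdge m) :
    magOp (m + 1) a G (newV (w, false)) = (2 : ℂ)⁻¹ *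
      ((G (newV (w, false)) - cexp (I * a (Fin.snoc w 1)) * G (oldV (dtgt m w))) +
        (G (newV (w, false)) - cexp (-(I * a (Fin.snoc w 0))) * G (oldV (dsrc m w)))) := by
  simp [magOp, ddeg_newV, sum_dedge_succ, Finset.sum_ite_eq']

theorem magOp_newV_true (a : DEdge (m + 1) → ℝ) (G : DVtx (m + 1) → ℂ) (w : DEdge m) :
    magOp (m + 1) a G (newV (w, true)) = (2 : ℂ)⁻¹ *
      ((G (newV (w, true)) - cexp (I * a (Fin.snoc w 3)) * G (oldV (dsrc m w))) +
        (G (newV (w, true)) - cexp (-(I * a (Fin.snoc w 2))) * G (oldV (dtgt m w)))) := by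
  simp [magOp, ddeg_newV, sum_dedge_succ, Finset.sum_ite_eq']

theorem magOp_oldV (a : DEdge (m + 1) → ℝ) (G : DVtx (m + 1) → ℂ) (x : DVtx m) :
    magOp (m + 1) a G (oldV x) = (2 * (ddeg m x : ℂ))⁻¹ *
      ∑ w : DEdge m,
        ((if dsrc m w = x then
            2 * G (oldV x) - cexp (I * a (Fin.snoc w 0)) * G (newV (w, false))
              - cexp (-(I * a (Fin.snoc w 3))) * G (newV (w, true)) else 0) +
          (if dtgt m w = x then
            2 * G (oldV x) - cexp (-(I * a (Fin.snoc w 1))) * G (newV (w, false))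
              - cexp (I * a (Fin.snoc w 2)) * G (newV (w, true)) else 0)) := by
  simp only [magOp, ddeg_oldV, sum_dedge_succ, ← Finset.sum_add_distrib, dsrc_snoc_zero,
    dsrc_snoc_one, dsrc_snoc_two, dsrc_snoc_three, dtgt_snoc_zero, dtgt_snoc_one, dtgt_snoc_two,
    dtgt_snoc_three, oldV_inj, newV_ne_oldV, if_false, add_zero, zero_add, Nat.cast_mul,
    Nat.cast_ofNat]
  congr 1
  exact Finset.sum_congr rfl fun w _ => by split_ifs <;> ring

end MagneticOperator

section Decimation

variable {m : ℕ}

def CompatibleStep (β : ℝ) (a : DEdge (m + 1) → ℝ) (a' : DEdge m → ℝ) : Prop :=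
  ∀ w, (cellFlux a w = 4 * β ∨ cellFlux a w = -(4 * β)) ∧ traceForm a w = a' w

theorem cell_phases {a : DEdge (m + 1) → ℝ} {a' : DEdge m → ℝ} {β : ℝ} {w : DEdge m}
    (hflux : cellFlux a w = 4 * β ∨ cellFlux a w = -(4 * β)) (htr : traceForm a w = a' w) :
    cexp (I * a (Fin.snoc w 0)) * cexp (I * a (Fin.snoc w 1)) +
        cexp (-(I * a (Fin.snoc w 3))) * cexp (-(I * a (Fin.snoc w 2))) =
      2 * Real.cos (2 * β) * cexp (I * a' w) ∧
    cexp (-(I * a (Fin.snoc w 1))) * cexp (-(I * a (Fin.snoc w 0))) +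
        cexp (I * a (Fin.snoc w 2)) * cexp (I * a (Fin.snoc w 3)) =
      2 * Real.cos (2 * β) * cexp (-(I * a' w)) := by
  obtain ⟨q, hq, hs, ht⟩ : ∃ q : ℝ, Real.cos q = Real.cos (2 * β) ∧
      a (Fin.snoc w 0) + a (Fin.snoc w 1) = a' w + q ∧
      a (Fin.snoc w 3) + a (Fin.snoc w 2) = q - a' w := by
    rw [traceForm] at htr
    rw [cellFlux] at hflux
    rcases hflux with h | h
    · exact ⟨2 * β, rfl, by linarith, by linarith⟩
    · exact ⟨-(2 * β), Real.cos_neg _, by linarith, by linarith⟩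
  have hsC : (a (Fin.snoc w 0) + a (Fin.snoc w 1) : ℂ) = a' w + q := by exact_mod_cast hs
  have htC : (a (Fin.snoc w 3) + a (Fin.snoc w 2) : ℂ) = q - a' w := by exact_mod_cast ht
  simp only [← Complex.exp_add, ← hq]
  constructor
  · convert cexp_add_cexp_neg (a' w) q using 3 <;> push_cast
    · linear_combination I * hsC
    · linear_combination (-I) * htC
  · have h := cexp_add_cexp_neg (-a' w) (-q)
    rw [Real.cos_neg] at h
    convert h using 3 <;> push_cast
    · linear_combination (-I) * hsC
    · linear_combination I * htC
    · ring

noncomputable def decimatedValue (a : DEdge (m + 1) → ℝ) (z : ℂ) (g : DVtx m → ℂ) (w : DEdge m) :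
    Bool → ℂ
  | false => (2 * (1 - z))⁻¹ *
      (cexp (-(I * a (Fin.snoc w 0))) * g (dsrc m w) + cexp (I * a (Fin.snoc w 1)) * g (dtgt m w))
  | true => (2 * (1 - z))⁻¹ *
      (cexp (-(I * a (Fin.snoc w 2))) * g (dtgt m w) + cexp (I * a (Fin.snoc w 3)) * g (dsrc m w))

theorem decimatedValue_add (a : DEdge (m + 1) → ℝ) (z : ℂ) (g h : DVtx m → ℂ) (w : DEdge m)
    (b : Bool) :
    decimatedValue a z (g + h) w b = decimatedValue a z g w b + decimatedValue a z h w b := by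
  cases b <;> simp only [decimatedValue, Pi.add_apply] <;> ring

theorem decimatedValue_smul (a : DEdge (m + 1) → ℝ) (z c : ℂ) (g : DVtx m → ℂ) (w : DEdge m)
    (b : Bool) : decimatedValue a z (c • g) w b = c * decimatedValue a z g w b := by
  cases b <;> simp only [decimatedValue, Pi.smul_apply, smul_eq_mul] <;> ring

noncomputable def decimate (a : DEdge (m + 1) → ℝ) (z : ℂ) :
    (DVtx m → ℂ) →ₗ[ℂ] (DVtx (m + 1) → ℂ) where
  toFun g := Sum.elim g fun p => decimatedValue a z g p.1 p.2
  map_add' g h := funext fun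
    | Sum.inl _ => rfl
    | Sum.inr (w, b) => decimatedValue_add a z g h w b
  map_smul' c g := funext fun
    | Sum.inl _ => rfl
    | Sum.inr (w, b) => decimatedValue_smul a z c g w b

@[simp] theorem decimate_oldV (a : DEdge (m + 1) → ℝ) (z : ℂ) (g : DVtx m → ℂ) (v : DVtx m) :
    decimate a z g (oldV v) = g v := rfl

@[simp] theorem decimate_newV (a : DEdge (m + 1) → ℝ) (z : ℂ) (g : DVtx m → ℂ) (w : DEdge m)
    (b : Bool) : decimate a z g (newV (w, b)) = decimatedValue a z g w b := rfl

theorem magOp_newV_eq_iff (a : DEdge (m + 1) → ℝ) {z : ℂ} (hz : z ≠ 1) (G : DVtx (m + 1) → ℂ)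
    (w : DEdge m) (b : Bool) :
    magOp (m + 1) a G (newV (w, b)) = z * G (newV (w, b)) ↔
      G (newV (w, b)) = decimatedValue a z (fun v => G (oldV v)) w b := by
  have h : (2 : ℂ) * (1 - z) ≠ 0 := mul_ne_zero two_ne_zero (sub_ne_zero.2 hz.symm)
  cases b <;>
  · simp only [magOp_newV_false, magOp_newV_true, decimatedValue]
    rw [eq_inv_mul_iff_mul_eq₀ h]
    constructor <;> intro h'
    · linear_combination 2 * h'
    · linear_combination h' / 2

theorem decimate_cell_terms {a : DEdge (m + 1) → ℝ} {a' : DEdge m → ℝ} {β : ℝ} {w : DEdge m}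
    (hflux : cellFlux a w = 4 * β ∨ cellFlux a w = -(4 * β)) (htr : traceForm a w = a' w)
    (z : ℂ) (g : DVtx m → ℂ) (x : DVtx m) :
    ((if dsrc m w = x then
        2 * g x - cexp (I * a (Fin.snoc w 0)) * decimatedValue a z g w false
          - cexp (-(I * a (Fin.snoc w 3))) * decimatedValue a z g w true else 0) +
      (if dtgt m w = x then
        2 * g x - cexp (-(I * a (Fin.snoc w 1))) * decimatedValue a z g w false
          - cexp (I * a (Fin.snoc w 2)) * decimatedValue a z g w true else 0)) =
      (2 - 2 * (1 + Real.cos (2 * β)) * (2 * (1 - z))⁻¹) *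
          ((if dsrc m w = x then 1 else 0) + if dtgt m w = x then 1 else 0) * g x +
        2 * Real.cos (2 * β) * (2 * (1 - z))⁻¹ *
          ((if dsrc m w = x then g x - cexp (I * a' w) * g (dtgt m w) else 0) +
            if dtgt m w = x then g x - cexp (-(I * a' w)) * g (dsrc m w) else 0) := by
  set T : ℂ := (2 * (1 - z))⁻¹ with hT
  have hinv : ∀ t : ℂ, cexp t * cexp (-t) = 1 := fun t => by
    rw [← Complex.exp_add, add_neg_cancel, Complex.exp_zero]
  have hinv' : ∀ t : ℂ, cexp (-t) * cexp t = 1 := fun t => by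
    rw [← Complex.exp_add, neg_add_cancel, Complex.exp_zero]
  obtain ⟨hphase, hphase'⟩ := cell_phases hflux htr
  simp only [decimatedValue, ← hT]
  split_ifs with hs ht ht
  · rw [hs, ht]
    linear_combination (-T * g x) * (hinv (I * a (Fin.snoc w 0)) + hinv' (I * a (Fin.snoc w 3))
      + hphase + hinv' (I * a (Fin.snoc w 1)) + hinv (I * a (Fin.snoc w 2)) + hphase')
  · rw [hs]
    linear_combination (-T * g x) * (hinv (I * a (Fin.snoc w 0)) + hinv' (I * a (Fin.snoc w 3)))
      - T * g (dtgt m w) * hphase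
  · rw [ht]
    linear_combination (-T * g x) * (hinv' (I * a (Fin.snoc w 1)) + hinv (I * a (Fin.snoc w 2)))
      - T * g (dsrc m w) * hphase'
  · ring

theorem magOp_decimate_oldV {a : DEdge (m + 1) → ℝ} {a' : DEdge m → ℝ} {β : ℝ}
    (hstep : CompatibleStep β a a') (z : ℂ) (g : DVtx m → ℂ) (x : DVtx m) :
    magOp (m + 1) a (decimate a z g) (oldV x) =
      (1 - (1 + Real.cos (2 * β)) * (2 * (1 - z))⁻¹) * g x +
        Real.cos (2 * β) * (2 * (1 - z))⁻¹ * magOp m a' g x := by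
  have hdeg : (ddeg m x : ℂ) ≠ 0 := Nat.cast_ne_zero.2 (ddeg_pos m x).ne'
  rw [magOp_oldV]
  simp only [decimate_oldV, decimate_newV]
  rw [Finset.sum_congr rfl fun w _ => decimate_cell_terms (hstep w).1 (hstep w).2 z g x,
    Finset.sum_add_distrib, ← Finset.sum_mul, ← Finset.mul_sum, ← Finset.mul_sum,
    ← ddeg_cast_eq_sum, magOp, ← Finset.sum_add_distrib]
  field_simp

theorem eq_decimate_of_magOp_newV {a : DEdge (m + 1) → ℝ} {z : ℂ} (hz : z ≠ 1)
    {G : DVtx (m + 1) → ℂ} (hG : ∀ w b, magOp (m + 1) a G (newV (w, b)) = z * G (newV (w, b))) :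
    decimate a z (fun v => G (oldV v)) = G :=
  funext fun
    | Sum.inl _ => rfl
    | Sum.inr (w, b) => ((magOp_newV_eq_iff a hz G w b).1 (hG w b)).symm

theorem magOp_decimate_newV (a : DEdge (m + 1) → ℝ) {z : ℂ} (hz : z ≠ 1) (g : DVtx m → ℂ)
    (w : DEdge m) (b : Bool) :
    magOp (m + 1) a (decimate a z g) (newV (w, b)) = z * decimate a z g (newV (w, b)) :=
  (magOp_newV_eq_iff a hz _ w b).2 rfl

noncomputable def spectralDecimation (c z : ℂ) : ℂ := (-2 * z ^ 2 + 4 * z - 1 + c) / c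

theorem decimation_eq_iff {c z X M : ℂ} (hc : c ≠ 0) (hz : z ≠ 1) :
    (1 - (1 + c) * (2 * (1 - z))⁻¹) * X + c * (2 * (1 - z))⁻¹ * M = z * X ↔
      M = spectralDecimation c z * X := by
  have hz' : 1 - z ≠ 0 := sub_ne_zero.2 hz.symm
  rw [spectralDecimation]
  field_simp
  constructor <;> intro h' <;> linear_combination h'

theorem magOp_oldV_eq_iff {a : DEdge (m + 1) → ℝ} {a' : DEdge m → ℝ} {β : ℝ} {z : ℂ}
    (hstep : CompatibleStep β a a') (hc : Real.cos (2 * β) ≠ 0) (hz : z ≠ 1)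
    {G : DVtx (m + 1) → ℂ}
    (hG : decimate a z (fun v => G (oldV v)) = G) (x : DVtx m) :
    magOp (m + 1) a G (oldV x) = z * G (oldV x) ↔
      magOp m a' (fun v => G (oldV v)) x =
        spectralDecimation (Real.cos (2 * β)) z * G (oldV x) := by
  have key := magOp_decimate_oldV hstep z (fun v => G (oldV v)) x
  rw [hG] at key
  rw [key]
  exact decimation_eq_iff (Complex.ofReal_ne_zero.2 hc) hz

end Decimation

section DirichletKernel

variable {m : ℕ}

theorem extend_val_base (f : Interior m → ℂ) (b : Bool) :
    Function.extend Subtype.val f 0 (base m b) = 0 :=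
  Function.extend_apply' _ _ _ fun ⟨x, hx⟩ => x.2 b hx

def interiorOldV (y : Interior m) : Interior (m + 1) :=
  ⟨oldV y.1, fun b hb => y.2 b (oldV_inj.1 hb)⟩

noncomputable def decimateInterior (a : DEdge (m + 1) → ℝ) (z : ℂ) :
    (Interior m → ℂ) →ₗ[ℂ] (Interior (m + 1) → ℂ) :=
  LinearMap.funLeft ℂ ℂ Subtype.val ∘ₗ decimate a z ∘ₗ
    Function.ExtendByZero.linearMap ℂ Subtype.val

theorem extend_funLeft_interiorOldV (f : Interior (m + 1) → ℂ) :
    Function.extend Subtype.val (LinearMap.funLeft ℂ ℂ interiorOldV f) 0 =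
      fun v => Function.extend Subtype.val f 0 (oldV v) := by
  have hF : ∀ v : DVtx m, ¬ (∀ b, v ≠ base m b) →
      Function.extend Subtype.val f 0 (oldV v) = 0 := by
    intro v hv
    obtain ⟨b, rfl⟩ := not_forall_not.1 hv
    exact extend_val_base f b
  rw [← extend_subtype_val_eq hF]
  congr 1
  funext y
  rw [LinearMap.funLeft_apply]
  exact (Subtype.val_injective.extend_apply f 0 (interiorOldV y)).symm

theorem extend_decimateInterior (a : DEdge (m + 1) → ℝ) (z : ℂ) (g : Interior m → ℂ) :
    Function.extend Subtype.val (decimateInterior a z g) 0 =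
      decimate a z (Function.extend Subtype.val g 0) := by
  refine extend_subtype_val_eq fun v hv => ?_
  obtain ⟨b, rfl⟩ := not_forall_not.1 hv
  exact extend_val_base g b

theorem decimateInterior_apply (a : DEdge (m + 1) → ℝ) (z : ℂ) (g : Interior m → ℂ)
    (x : Interior (m + 1)) :
    decimateInterior a z g x = decimate a z (Function.extend Subtype.val g 0) x.1 := rfl

theorem funLeft_interiorOldV_decimateInterior (a : DEdge (m + 1) → ℝ) (z : ℂ)
    (g : Interior m → ℂ) : LinearMap.funLeft ℂ ℂ interiorOldV (decimateInterior a z g) = g :=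
  funext fun y => Subtype.val_injective.extend_apply g 0 y

variable {a : DEdge (m + 1) → ℝ} {a' : DEdge m → ℝ} {β : ℝ} {z : ℂ}

theorem decimate_extend_of_mem_ker (hz : z ≠ 1) {f : Interior (m + 1) → ℂ}
    (hf : f ∈ LinearMap.ker (toLin' (dirMat (m + 1) a - z • 1))) :
    decimate a z (fun v => Function.extend Subtype.val f 0 (oldV v)) =
      Function.extend Subtype.val f 0 :=
  eq_decimate_of_magOp_newV hz fun w b =>
    (mem_ker_dirMat_sub_iff _ _ _).1 hf ⟨newV (w, b), fun _ => newV_ne_oldV _ _⟩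

theorem decimateInterior_funLeft_interiorOldV (hz : z ≠ 1) {f : Interior (m + 1) → ℂ}
    (hf : f ∈ LinearMap.ker (toLin' (dirMat (m + 1) a - z • 1))) :
    decimateInterior a z (LinearMap.funLeft ℂ ℂ interiorOldV f) = f := by
  funext x
  rw [decimateInterior_apply, extend_funLeft_interiorOldV, decimate_extend_of_mem_ker hz hf,
    Subtype.val_injective.extend_apply]

theorem funLeft_interiorOldV_mem_ker (hstep : CompatibleStep β a a')
    (hc : Real.cos (2 * β) ≠ 0) (hz : z ≠ 1) {f : Interior (m + 1) → ℂ}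
    (hf : f ∈ LinearMap.ker (toLin' (dirMat (m + 1) a - z • 1))) :
    LinearMap.funLeft ℂ ℂ interiorOldV f ∈
      LinearMap.ker (toLin' (dirMat m a' - spectralDecimation (Real.cos (2 * β)) z • 1)) := by
  have hG := decimate_extend_of_mem_ker hz hf
  rw [mem_ker_dirMat_sub_iff] at hf ⊢
  rw [extend_funLeft_interiorOldV]
  exact fun y => (magOp_oldV_eq_iff hstep hc hz hG y).1 (hf (interiorOldV y))

theorem decimateInterior_mem_ker (hstep : CompatibleStep β a a')
    (hc : Real.cos (2 * β) ≠ 0) (hz : z ≠ 1) {g : Interior m → ℂ}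
    (hg : g ∈ LinearMap.ker (toLin' (dirMat m a' - spectralDecimation (Real.cos (2 * β)) z • 1))) :
    decimateInterior a z g ∈ LinearMap.ker (toLin' (dirMat (m + 1) a - z • 1)) := by
  rw [mem_ker_dirMat_sub_iff] at hg ⊢
  rw [extend_decimateInterior]
  rintro ⟨v | ⟨w, b⟩, hx⟩
  · exact (magOp_oldV_eq_iff hstep hc hz rfl v).2 (hg ⟨v, fun b hb => hx b (congrArg oldV hb)⟩)
  · exact magOp_decimate_newV a hz _ w b

noncomputable def decimationKerEquiv (hstep : CompatibleStep β a a')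
    (hc : Real.cos (2 * β) ≠ 0) (hz : z ≠ 1) :
    LinearMap.ker (toLin' (dirMat (m + 1) a - z • 1)) ≃ₗ[ℂ]
      LinearMap.ker (toLin' (dirMat m a' - spectralDecimation (Real.cos (2 * β)) z • 1)) :=
  LinearEquiv.ofLinearMap
    ((LinearMap.funLeft ℂ ℂ interiorOldV).restrict
      fun _ hf => funLeft_interiorOldV_mem_ker hstep hc hz hf)
    ((decimateInterior a z).restrict fun _ hg => decimateInterior_mem_ker hstep hc hz hg)
    (LinearMap.ext fun g => Subtype.ext (funLeft_interiorOldV_decimateInterior a z g.1))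
    (LinearMap.ext fun f => Subtype.ext (decimateInterior_funLeft_interiorOldV hz f.2))

end DirichletKernel

/-- Spectral decimation relation between consecutive Dirichlet magnetic operators: for
`m = k+2 ≥ 2` with `cos 2β_m ≠ 0`, any eigenvalue `z ≠ 1` of `D_m` maps under
`R_m(z) = (−2z² + 4z − 1 + cos 2β_m)/cos 2β_m` to an eigenvalue of `D_{m−1}` of the same
multiplicity. -/
theorem stmt10 (βs : ℕ → ℝ) (a : (m : ℕ) → DEdge m → ℝ) (hcomp : Compatible βs a)
    (k : ℕ) (hβ : Real.cos (2 * βs (k + 2)) ≠ 0) (z : ℂ) (hz : z ≠ 1)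
    (hev : Module.End.HasEigenvalue (Matrix.toLin' (dirMat (k + 2) (a (k + 2)))) z) :
    Module.End.HasEigenvalue (Matrix.toLin' (dirMat (k + 1) (a (k + 1))))
      ((-2 * z ^ 2 + 4 * z - 1 + ((Real.cos (2 * βs (k + 2)) : ℝ) : ℂ)) /
        ((Real.cos (2 * βs (k + 2)) : ℝ) : ℂ)) ∧
    Module.finrank ℂ
        (LinearMap.ker (Matrix.toLin' (dirMat (k + 2) (a (k + 2)) - z • 1))) =
      Module.finrank ℂ
        (LinearMap.ker (Matrix.toLin' (dirMat (k + 1) (a (k + 1)) -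
          ((-2 * z ^ 2 + 4 * z - 1 + ((Real.cos (2 * βs (k + 2)) : ℝ) : ℂ)) /
            ((Real.cos (2 * βs (k + 2)) : ℝ) : ℂ)) • 1))) := by
  let e := decimationKerEquiv (hcomp (k + 1)) hβ hz
  refine ⟨?_, e.finrank_eq⟩
  rw [hasEigenvalue_toLin'_iff] at hev ⊢
  exact e.symm.toEquiv.nontrivial
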